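/- arXiv:2201.06663 — 3 statements merged into one kernel-verified Lean document; each statement's English description precedes it below -/
import Mathlib

section
/- Let G be a finite cyclic group of order N and let 𝓐 ⊆ G with |𝓐| > N/ρ + 2 for some real ρ > 0. Suppose additionally that, writing elements of 𝓐 as powers of a fixed generator with exponents in {0,...,N-1}, the (⌈(N-2)/(|𝓐|-2)⌉)-fold sumset of the exponent set contains N consecutive multiples of some d' ≤ (N-2)/(|𝓐|-2). Then the k-fold product set 𝓐^k contains the subgroup of G of index gcd(d', N), for some k ≤ 2(N-2)/(|𝓐|-2) + 1, and gcd(d', N) ≤ (N-2)/(|𝓐|-2) < ρ. -/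
/-- Let `G` be a finite cyclic group of order `N` (with generator `g`) and `𝓐 ⊆ G` with
`|𝓐| > N/ρ + 2` for some `ρ > 0`. Suppose the `⌈(N-2)/(|𝓐|-2)⌉`-fold sumset of the exponent
set of `𝓐` (exponents taken in `{0,...,N-1}`) contains `N` consecutive multiples of some
`d' ≤ (N-2)/(|𝓐|-2)`. Then the `k`-fold product set `𝓐^k` contains the subgroup of `G` of
index `gcd(d', N)` for some `k ≤ 2(N-2)/(|𝓐|-2) + 1`, and
`gcd(d', N) ≤ (N-2)/(|𝓐|-2) < ρ`. -/
theorem stmt_13 (G : Type*) [CommGroup G] [Fintype G] (N : ℕ) (hN : Fintype.card G = N)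
    (g : G) (hg : ∀ x : G, x ∈ Subgroup.zpowers g)
    (ρ : ℝ) (hρ : 0 < ρ)
    (𝓐 : Finset G) (hA : (𝓐.card : ℝ) > (N : ℝ) / ρ + 2)
    (d' : ℕ) (hd'pos : 1 ≤ d')
    (hd'le : (d' : ℝ) ≤ ((N : ℝ) - 2) / ((𝓐.card : ℝ) - 2))
    (m : ℕ)
    (hsum : ∀ j < N, ∃ f : Fin (⌈((N : ℝ) - 2) / ((𝓐.card : ℝ) - 2)⌉₊) → ℕ,
        (∀ i, f i < N ∧ g ^ (f i) ∈ 𝓐) ∧ ∑ i, f i = (m + j) * d') :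
    ∃ k : ℕ, (k : ℝ) ≤ 2 * ((N : ℝ) - 2) / ((𝓐.card : ℝ) - 2) + 1 ∧
      (∀ x : G, x ^ (N / Nat.gcd d' N) = 1 →
        ∃ f : Fin k → G, (∀ i, f i ∈ 𝓐) ∧ ∏ i, f i = x) ∧
      (Nat.gcd d' N : ℝ) ≤ ((N : ℝ) - 2) / ((𝓐.card : ℝ) - 2) ∧
      ((N : ℝ) - 2) / ((𝓐.card : ℝ) - 2) < ρ := by
  have hN1 : 0 < N := hN ▸ Fintype.card_pos
  have hordg : orderOf g = N := by
    rw [← hN, ← Nat.card_eq_fintype_card]; exact orderOf_eq_card_of_forall_mem_zpowers hg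
  set X : ℝ := ((N:ℝ)-2)/((𝓐.card:ℝ)-2) with hXdef
  have hρN : (0:ℝ) < (N:ℝ)/ρ := by positivity
  have hcard2 : (0:ℝ) < (𝓐.card:ℝ) - 2 := by linarith
  have hX1 : (1:ℝ) ≤ X := le_trans (by exact_mod_cast hd'pos) hd'le
  have hXρ : X < ρ := by
    rw [hXdef, div_lt_iff₀ hcard2]
    have h2 : (N:ℝ)/ρ < (𝓐.card:ℝ) - 2 := by linarith
    rw [div_lt_iff₀ hρ] at h2
    nlinarith
  set g0 := Nat.gcd d' N with hg0
  have hg0pos : 0 < g0 := Nat.gcd_pos_of_pos_left _ hd'pos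
  have hg0dvd : g0 ∣ N := Nat.gcd_dvd_right _ _
  have hg0dvd' : g0 ∣ d' := Nat.gcd_dvd_left _ _
  have hdivpos : 0 < N / g0 := Nat.div_pos (Nat.le_of_dvd hN1 hg0dvd) hg0pos
  refine ⟨⌈X⌉₊, ?_, ?_, ?_, hXρ⟩
  · have h1 := Nat.ceil_lt_add_one (le_trans zero_le_one hX1)
    have h2 : 2*((N:ℝ)-2)/((𝓐.card:ℝ)-2) = 2*X := by rw [hXdef]; ring
    rw [h2]; linarith
  · intro y hy
    obtain ⟨n, hn⟩ := hg y
    -- natural exponent a < N with g ^ a = y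
    have ha' : ((n % (N:ℤ)).toNat : ℤ) = n % N :=
      Int.toNat_of_nonneg (Int.emod_nonneg n (by exact_mod_cast hN1.ne'))
    set a := (n % (N:ℤ)).toNat with hadef
    have haN : a < N := by
      have := Int.emod_lt_of_pos n (by exact_mod_cast hN1 : (0:ℤ) < N)
      omega
    have hga : g ^ a = y := by
      have : g ^ ((a:ℤ)) = y := by
        rw [ha', ← hordg]
        rw [show ((orderOf g : ℤ)) = (orderOf g : ℤ) from rfl]
        rw [zpow_mod_orderOf]
        exact hn
      simpa [zpow_natCast] using this
    -- g0 ∣ a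
    have hdvd : N ∣ a * (N / g0) := by
      have h : g ^ (a * (N / g0)) = 1 := by rw [pow_mul, hga]; exact hy
      have h2 := orderOf_dvd_of_pow_eq_one h
      rwa [hordg] at h2
    have hg0a : g0 ∣ a := by
      have hNe : g0 * (N / g0) = N := Nat.mul_div_cancel' hg0dvd
      have h2 : g0 * (N / g0) ∣ a * (N / g0) := by rw [hNe]; exact hdvd
      exact (Nat.mul_dvd_mul_iff_right hdivpos).mp h2
    obtain ⟨t, ht⟩ := hg0a
    -- Bezout: find u with u * d' ≡ a  [ZMOD N]
    have hbez : (g0 : ℤ) = d' * Nat.gcdA d' N + N * Nat.gcdB d' N := Nat.gcd_eq_gcd_ab d' N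
    set u : ℤ := Nat.gcdA d' N * t with hu
    have hua : (u * d') ≡ (a : ℤ) [ZMOD N] := by
      have : (a : ℤ) = u * d' + N * (Nat.gcdB d' N * t) := by
        rw [ht]; push_cast; rw [hbez]; ring
      rw [this]
      exact (Int.modEq_iff_dvd.mpr ⟨Nat.gcdB d' N * t, by ring⟩)
    -- choose j
    set j : ℕ := ((u - m) % N).toNat with hj
    have hjZ : ((j:ℤ)) = (u - m) % N :=
      Int.toNat_of_nonneg (Int.emod_nonneg _ (by exact_mod_cast hN1.ne'))
    have hjN : j < N := by
      have := Int.emod_lt_of_pos (u - m) (by exact_mod_cast hN1 : (0:ℤ) < N)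
      omega
    obtain ⟨f, hf1, hf2⟩ := hsum j hjN
    refine ⟨fun i => g ^ f i, fun i => (hf1 i).2, ?_⟩
    have hprod : ∏ i, g ^ f i = g ^ ((m + j) * d') := by
      rw [← hf2]
      exact Finset.prod_pow_eq_pow_sum _ _ _
    rw [hprod, ← hga]
    rw [pow_eq_pow_iff_modEq, hordg]
    -- show (m+j)*d' ≡ a [MOD N]
    have h1 : ((j:ℤ)) ≡ u - m [ZMOD N] := by
      rw [hjZ]; exact Int.emod_emod_of_dvd _ dvd_rfl
    have hZ : (((m + j) * d' : ℕ) : ℤ) ≡ (a : ℤ) [ZMOD N] := by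
      push_cast
      calc ((m:ℤ) + j) * d' ≡ (m + (u - m)) * d' [ZMOD N] := (h1.add_left _).mul_right _
        _ = u * d' := by ring
        _ ≡ (a:ℤ) [ZMOD N] := hua
    exact Nat.modEq_iff_dvd.mpr hZ.dvd
  · exact le_trans (by exact_mod_cast Nat.gcd_le_left N hd'pos) hd'le
end

section
/- Let p ≥ 7 be a prime such that every nonzero residue class modulo any irreducible F ∈ F_p[X] of degree r ≥ 2 has a non-constant square-free (r-1)-smooth representative. Define a sequence of monic irreducible polynomials in F_p[X] starting with X, where at each step, if N is the product of terms so far, the next term is the minimal (in the order induced by I(f) = Σ a_k p^k) monic irreducible g not dividing N such that g divides h + 1 for some divisor h of N. Then this sequence produces all monic irreducible polynomials of F_p[X] in increasing order. -/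
/-!
`I(f)` is the integer whose base-`p` digits are the coefficients of `f`, so `I` is injective on
nonzero polynomials and `deg f = ⌊log_p I(f)⌋`; in particular `I` increases with the degree.

By induction, the product `N` of the first `n + 1` terms is divisible by exactly those monic
irreducibles `g` with `I(g) ≤ I(seq n)`, and the next term is the `I`-least monic irreducible `F`
not dividing `N`. For this it suffices that `F` itself is admissible, i.e. `F ∣ h + 1` for some
`h ∣ N`. If `deg F = 1` then `F = X + c` with `c ≠ 0` (as `X ∣ N`), and `h = X + (c - 1)` has
smaller `I`-value, so divides `N`. If `deg F ≥ 2`, take a square-free `(deg F - 1)`-smooth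
representative `h` of `-1` modulo `F`: its irreducible factors have smaller degree, hence smaller
`I`-value than `F`, so they divide `N`, and so does `h` since it is square-free.
-/

/-- The value `I(f) = Σ a_k p^k` of a polynomial over `ZMod p`, inducing a total order. -/
def Ival (p : ℕ) (f : Polynomial (ZMod p)) : ℕ :=
  ∑ k ∈ Finset.range (f.natDegree + 1), (f.coeff k).val * p ^ k

open Polynomial Finset

theorem Nat.ofDigits_map_range (b n : ℕ) (a : ℕ → ℕ) :
    Nat.ofDigits b ((List.range n).map a) = ∑ k ∈ range n, a k * b ^ k := by
  induction n with
  | zero => simp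
  | succ n ih =>
    rw [List.range_succ, List.map_append, Nat.ofDigits_append, ih, sum_range_succ]
    simp [Nat.ofDigits_singleton, mul_comm]

theorem Squarefree.dvd_of_forall_irreducible_dvd {R : Type*} [CommMonoidWithZero R]
    [Nontrivial R] [NormalizationMonoid R] [UniqueFactorizationMonoid R] {f N : R}
    (hf : Squarefree f) (hN : N ≠ 0) (H : ∀ q, Irreducible q → q ∣ f → q ∣ N) :
    f ∣ N := by
  refine (hf.isRadical.dvd_radical hf.ne_zero).trans <|
    (UniqueFactorizationMonoid.radical_dvd_iff_primeFactors_subset hN).2 fun q hq => ?_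
  rw [UniqueFactorizationMonoid.mem_primeFactors,
    UniqueFactorizationMonoid.mem_normalizedFactors_iff' hf.ne_zero] at hq
  rw [UniqueFactorizationMonoid.mem_primeFactors,
    UniqueFactorizationMonoid.mem_normalizedFactors_iff' hN]
  exact ⟨hq.1, hq.2.1, H q hq.1 hq.2.2⟩

namespace Polynomial

variable {K : Type*} [Field K]

theorem Monic.eq_of_irreducible_of_dvd {f g : K[X]} (hf : f.Monic) (hg : g.Monic)
    (hfi : Irreducible f) (hgi : Irreducible g) (h : f ∣ g) : f = g :=
  eq_of_monic_of_associated hf hg (hfi.associated_of_dvd hgi h)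

theorem exists_monic_irreducible_not_dvd {N : K[X]} (hN : N ≠ 0) :
    ∃ g : K[X], g.Monic ∧ Irreducible g ∧ ¬ g ∣ N := by
  have hunit : ¬ IsUnit (N * X + 1) := by
    refine not_isUnit_of_natDegree_pos _ ?_
    rw [natDegree_add_eq_left_of_natDegree_lt] <;> simp [natDegree_mul_X hN]
  obtain ⟨g, hgm, hgi, hg⟩ := exists_monic_irreducible_factor _ hunit
  refine ⟨g, hgm, hgi, fun hgN => hgi.not_isUnit (isUnit_of_dvd_one ?_)⟩
  exact (dvd_add_right (hgN.mul_right X)).1 hg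

end Polynomial

section Ival

variable {p : ℕ} [Fact p.Prime]

def coeffDigits (f : (ZMod p)[X]) : List ℕ :=
  (List.range (f.natDegree + 1)).map fun k => (f.coeff k).val

theorem Ival_eq_ofDigits (f : (ZMod p)[X]) : Ival p f = Nat.ofDigits p (coeffDigits f) :=
  (Nat.ofDigits_map_range _ _ _).symm

theorem digits_Ival {f : (ZMod p)[X]} (hf : f ≠ 0) : Nat.digits p (Ival p f) = coeffDigits f := by
  rw [Ival_eq_ofDigits]
  refine Nat.digits_ofDigits _ (Fact.out : p.Prime).one_lt _ ?_ ?_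
  · simp [coeffDigits, ZMod.val_lt]
  · intro h
    simp [coeffDigits, List.getLast_map, List.getLast_range, hf]

theorem Ival_ne_zero {f : (ZMod p)[X]} (hf : f ≠ 0) : Ival p f ≠ 0 := by
  intro h
  have := digits_Ival hf
  simp [h, coeffDigits] at this

theorem log_Ival {f : (ZMod p)[X]} (hf : f ≠ 0) : Nat.log p (Ival p f) = f.natDegree := by
  have := congrArg List.length (digits_Ival hf)
  rw [Nat.length_digits _ _ (Fact.out : p.Prime).one_lt (Ival_ne_zero hf)] at this
  simpa [coeffDigits] using this

theorem eq_of_Ival_eq {f g : (ZMod p)[X]} (hf : f ≠ 0) (hg : g ≠ 0) (h : Ival p f = Ival p g) :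
    f = g := by
  have hdeg : f.natDegree = g.natDegree := by rw [← log_Ival hf, ← log_Ival hg, h]
  have hdig := (digits_Ival hf).symm.trans (h ▸ digits_Ival hg)
  rw [coeffDigits, coeffDigits, hdeg, List.map_inj_left] at hdig
  ext k
  by_cases hk : k ≤ g.natDegree
  · exact ZMod.val_injective p (hdig k (by simp; omega))
  · rw [coeff_eq_zero_of_natDegree_lt (by omega), coeff_eq_zero_of_natDegree_lt (by omega)]

theorem natDegree_le_of_Ival_le {f g : (ZMod p)[X]} (hf : f ≠ 0) (hg : g ≠ 0)
    (h : Ival p f ≤ Ival p g) : f.natDegree ≤ g.natDegree := by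
  rw [← log_Ival hf, ← log_Ival hg]
  exact Nat.log_mono_right h

theorem Ival_X_add_C (c : ZMod p) : Ival p (X + C c) = c.val + p := by
  simp [Ival, sum_range_succ, ZMod.val_one_eq_one_mod,
    Nat.mod_eq_of_lt (Fact.out : p.Prime).one_lt]

theorem Ival_X_le {g : (ZMod p)[X]} (hg : 0 < g.natDegree) : Ival p X ≤ Ival p g := by
  have hg0 : g ≠ 0 := ne_zero_of_natDegree_gt hg
  calc Ival p X = p ^ 1 := by simpa using Ival_X_add_C (0 : ZMod p)
    _ ≤ p ^ g.natDegree := Nat.pow_le_pow_right (Fact.out : p.Prime).pos hg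
    _ ≤ Ival p g := log_Ival hg0 ▸ Nat.pow_log_le_self p (Ival_ne_zero hg0)

theorem dvd_X_iff_Ival_le {g : (ZMod p)[X]} (hgm : g.Monic) (hgi : Irreducible g) :
    g ∣ X ↔ Ival p g ≤ Ival p X := by
  refine ⟨fun h => ?_, fun h => ?_⟩
  · rw [hgm.eq_of_irreducible_of_dvd monic_X hgi irreducible_X h]
  · rw [eq_of_Ival_eq hgm.ne_zero X_ne_zero (h.antisymm (Ival_X_le hgi.natDegree_pos))]

end Ival

section LeastNonDivisor

def HasSmoothSquarefreeReps (p : ℕ) : Prop :=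
  ∀ F : (ZMod p)[X], Irreducible F → 2 ≤ F.natDegree → ∀ a : (ZMod p)[X], ¬ F ∣ a →
    ∃ f : (ZMod p)[X], Squarefree f ∧ 1 ≤ f.natDegree ∧
      (∀ g : (ZMod p)[X], Irreducible g → g ∣ f → g.natDegree ≤ F.natDegree - 1) ∧
      F ∣ f - a

variable {p : ℕ} [Fact p.Prime]

def IsLeastNonDivisor (N F : (ZMod p)[X]) : Prop :=
  F.Monic ∧ Irreducible F ∧ ¬ F ∣ N ∧
    ∀ g : (ZMod p)[X], g.Monic → Irreducible g → ¬ g ∣ N → Ival p F ≤ Ival p g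

theorem exists_isLeastNonDivisor {N : (ZMod p)[X]} (hN : N ≠ 0) :
    ∃ F, IsLeastNonDivisor N F := by
  obtain ⟨F, hF, hmin⟩ :=
    (measure (Ival p)).wf.has_min {g | g.Monic ∧ Irreducible g ∧ ¬ g ∣ N}
    (exists_monic_irreducible_not_dvd hN)
  exact ⟨F, hF.1, hF.2.1, hF.2.2, fun g hgm hgi hgN => not_lt.1 (hmin g ⟨hgm, hgi, hgN⟩)⟩

namespace IsLeastNonDivisor

variable {N F : (ZMod p)[X]}

theorem ne_zero (hF : IsLeastNonDivisor N F) : N ≠ 0 := by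
  rintro rfl
  exact hF.2.2.1 (dvd_zero F)

theorem dvd_of_natDegree_lt (hF : IsLeastNonDivisor N F) {q : (ZMod p)[X]} (hq : Irreducible q)
    (hdeg : q.natDegree < F.natDegree) : q ∣ N := by
  have hq0 : q ≠ 0 := hq.ne_zero
  have hqm : (q * C q.leadingCoeff⁻¹).Monic := monic_mul_leadingCoeff_inv hq0
  have hassoc : Associated q (q * C q.leadingCoeff⁻¹) :=
    associated_mul_unit_right _ _ (isUnit_C.2 (isUnit_iff_ne_zero.2 (by simpa using hq0)))
  refine hassoc.dvd_iff_dvd_left.2 (by_contra fun hqN => ?_)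
  have := natDegree_le_of_Ival_le hF.1.ne_zero hqm.ne_zero
    (hF.2.2.2 _ hqm (hassoc.irreducible hq) hqN)
  rw [natDegree_mul_leadingCoeff_inv _ hq0] at this
  omega

theorem exists_dvd_add_one_of_natDegree_eq_one (hF : IsLeastNonDivisor N F) (hX : X ∣ N)
    (hdeg : F.natDegree = 1) : ∃ h, h ∣ N ∧ F ∣ h + 1 := by
  set c := F.coeff 0
  have hFc : F = X + C c := hF.1.eq_X_add_C hdeg
  have hc : c ≠ 0 := by
    intro hc
    exact hF.2.2.1 (by rwa [hFc, hc, C_0, add_zero])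
  have hIval : Ival p (X + C (c - 1)) < Ival p F := by
    have hval : (c - 1).val = c.val - 1 := by
      rw [ZMod.val_sub (by rwa [ZMod.val_one, Nat.one_le_iff_ne_zero, ZMod.val_ne_zero]),
        ZMod.val_one]
    have hc0 : c.val ≠ 0 := (ZMod.val_ne_zero c).2 hc
    rw [hFc, Ival_X_add_C, Ival_X_add_C]
    omega
  refine ⟨X + C (c - 1), by_contra fun hN => ?_, ?_⟩
  · have hirr : Irreducible (X + C (c - 1)) := by
      simpa [sub_eq_add_neg] using irreducible_X_sub_C (-(c - 1))
    exact (hF.2.2.2 _ (monic_X_add_C _) hirr hN).not_gt hIval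
  · rw [hFc, add_assoc, ← C_1, ← C_add, sub_add_cancel]

theorem exists_dvd_add_one_of_two_le_natDegree (hrep : HasSmoothSquarefreeReps p)
    (hF : IsLeastNonDivisor N F) (hdeg : 2 ≤ F.natDegree) : ∃ h, h ∣ N ∧ F ∣ h + 1 := by
  obtain ⟨f, hsf, -, hsmooth, hFf⟩ :=
    hrep F hF.2.1 hdeg (-1) fun h => hF.2.1.not_isUnit (isUnit_of_dvd_unit h isUnit_one.neg)
  refine ⟨f, hsf.dvd_of_forall_irreducible_dvd hF.ne_zero fun q hq hqf =>
    hF.dvd_of_natDegree_lt hq (by have := hsmooth q hq hqf; omega), by simpa using hFf⟩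

theorem exists_dvd_add_one (hrep : HasSmoothSquarefreeReps p) (hF : IsLeastNonDivisor N F)
    (hX : X ∣ N) : ∃ h, h ∣ N ∧ F ∣ h + 1 := by
  rcases (Nat.one_le_iff_ne_zero.2 hF.2.1.natDegree_pos.ne').eq_or_lt with hdeg | hdeg
  · exact hF.exists_dvd_add_one_of_natDegree_eq_one hX hdeg.symm
  · exact hF.exists_dvd_add_one_of_two_le_natDegree hrep hdeg

theorem dvd_mul_iff {m : ℕ}
    (hN : ∀ g : (ZMod p)[X], g.Monic → Irreducible g → (g ∣ N ↔ Ival p g ≤ m))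
    (hF : IsLeastNonDivisor N F) {g : (ZMod p)[X]} (hgm : g.Monic) (hgi : Irreducible g) :
    g ∣ N * F ↔ Ival p g ≤ Ival p F := by
  have hm : m < Ival p F := not_le.1 fun h => hF.2.2.1 ((hN F hF.1 hF.2.1).2 h)
  rw [hgi.prime.dvd_mul, hN g hgm hgi]
  refine ⟨?_, fun hg => ?_⟩
  · rintro (hg | hg)
    · omega
    · rw [hgm.eq_of_irreducible_of_dvd hF.1 hgi hF.2.1 hg]
  · by_contra! h
    refine h.2 (dvd_of_eq (eq_of_Ival_eq hF.1.ne_zero hgm.ne_zero ?_).symm)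
    exact le_antisymm (hF.2.2.2 g hgm hgi ((hN g hgm hgi).not.2 (not_le.2 h.1))) hg

end IsLeastNonDivisor

end LeastNonDivisor

section GreedySequence

variable {p : ℕ} [Fact p.Prime]

def IsGreedyStep (N g : (ZMod p)[X]) : Prop :=
  g.Monic ∧ Irreducible g ∧ ¬ g ∣ N ∧ (∃ h, h ∣ N ∧ g ∣ h + 1) ∧
    ∀ g' : (ZMod p)[X], g'.Monic → Irreducible g' → ¬ g' ∣ N →
      (∃ h, h ∣ N ∧ g' ∣ h + 1) → Ival p g ≤ Ival p g'

theorem IsGreedyStep.isLeastNonDivisor (hrep : HasSmoothSquarefreeReps p) {N g : (ZMod p)[X]}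
    (hN : N ≠ 0) (hX : X ∣ N) (hg : IsGreedyStep N g) : IsLeastNonDivisor N g := by
  obtain ⟨F, hF⟩ := exists_isLeastNonDivisor hN
  have hgF : Ival p g ≤ Ival p F :=
    hg.2.2.2.2 F hF.1 hF.2.1 hF.2.2.1 (hF.exists_dvd_add_one hrep hX)
  have hFg : Ival p F ≤ Ival p g := hF.2.2.2 g hg.1 hg.2.1 hg.2.2.1
  rwa [eq_of_Ival_eq hg.1.ne_zero hF.1.ne_zero (le_antisymm hgF hFg)]

variable {seq : ℕ → (ZMod p)[X]}

theorem monic_irreducible_of_isGreedyStep (hseq0 : seq 0 = X)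
    (hseq : ∀ n, IsGreedyStep (∏ i ∈ range (n + 1), seq i) (seq (n + 1))) (n : ℕ) :
    (seq n).Monic ∧ Irreducible (seq n) := by
  cases n with
  | zero => exact hseq0 ▸ ⟨monic_X, irreducible_X⟩
  | succ n => exact ⟨(hseq n).1, (hseq n).2.1⟩

theorem dvd_prod_range_iff_of_isGreedyStep (hrep : HasSmoothSquarefreeReps p)
    (hseq0 : seq 0 = X)
    (hseq : ∀ n, IsGreedyStep (∏ i ∈ range (n + 1), seq i) (seq (n + 1))) (n : ℕ)
    {g : (ZMod p)[X]} (hgm : g.Monic) (hgi : Irreducible g) :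
    g ∣ ∏ i ∈ range (n + 1), seq i ↔ Ival p g ≤ Ival p (seq n) := by
  induction n generalizing g with
  | zero => simpa [hseq0] using dvd_X_iff_Ival_le hgm hgi
  | succ n ih =>
    have hmonic : (∏ i ∈ range (n + 1), seq i).Monic :=
      monic_prod_of_monic _ _ fun i _ => (monic_irreducible_of_isGreedyStep hseq0 hseq i).1
    have hX : X ∣ ∏ i ∈ range (n + 1), seq i :=
      hseq0 ▸ Finset.dvd_prod_of_mem seq (mem_range.2 n.succ_pos)
    rw [prod_range_succ]
    exact ((hseq n).isLeastNonDivisor hrep hmonic.ne_zero hX).dvd_mul_iff (fun g' => ih) hgm hgi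

end GreedySequence

theorem stmt_15_general (p : ℕ) [Fact p.Prime]
    (hrep : ∀ F : Polynomial (ZMod p), Irreducible F → 2 ≤ F.natDegree →
      ∀ a : Polynomial (ZMod p), ¬ F ∣ a →
        ∃ f : Polynomial (ZMod p), Squarefree f ∧ 1 ≤ f.natDegree ∧
          (∀ g : Polynomial (ZMod p), Irreducible g → g ∣ f →
            g.natDegree ≤ F.natDegree - 1) ∧ F ∣ f - a)
    (seq : ℕ → Polynomial (ZMod p)) (hseq0 : seq 0 = Polynomial.X)
    (hseq : ∀ n : ℕ,
      (seq (n + 1)).Monic ∧ Irreducible (seq (n + 1)) ∧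
      ¬ seq (n + 1) ∣ (∏ i ∈ Finset.range (n + 1), seq i) ∧
      (∃ h : Polynomial (ZMod p), h ∣ (∏ i ∈ Finset.range (n + 1), seq i) ∧
        seq (n + 1) ∣ h + 1) ∧
      (∀ g : Polynomial (ZMod p), g.Monic → Irreducible g →
        ¬ g ∣ (∏ i ∈ Finset.range (n + 1), seq i) →
        (∃ h : Polynomial (ZMod p), h ∣ (∏ i ∈ Finset.range (n + 1), seq i) ∧ g ∣ h + 1) →
        Ival p (seq (n + 1)) ≤ Ival p g)) :
    StrictMono (fun n => Ival p (seq n)) ∧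
    ∀ g : Polynomial (ZMod p), g.Monic → Irreducible g → ∃ n, seq n = g := by
  have hdvd := dvd_prod_range_iff_of_isGreedyStep hrep hseq0 hseq
  have hmono : StrictMono fun n => Ival p (seq n) := strictMono_nat_of_lt_succ fun n =>
    not_le.1 fun hle => (hseq n).2.2.1 ((hdvd n (hseq n).1 (hseq n).2.1).2 hle)
  refine ⟨hmono, fun g hgm hgi => ?_⟩
  obtain ⟨i, -, hgi'⟩ :=
    hgi.prime.exists_mem_finset_dvd ((hdvd _ hgm hgi).2 (hmono.id_le (Ival p g)))
  obtain ⟨hm, hi⟩ := monic_irreducible_of_isGreedyStep hseq0 hseq i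
  exact ⟨i, (hgm.eq_of_irreducible_of_dvd hm hgi hi hgi').symm⟩

/-- Let `p ≥ 7` be a prime such that every nonzero residue class modulo any irreducible
`F ∈ F_p[X]` of degree `r ≥ 2` has a non-constant square-free `(r-1)`-smooth representative.
Consider a sequence of monic irreducible polynomials starting with `X`, where at each step,
if `N` is the product of terms so far, the next term is the `I`-minimal monic irreducible `g`
not dividing `N` with `g ∣ h + 1` for some `h ∣ N`. Then the sequence produces all monic
irreducible polynomials of `F_p[X]` in increasing order. -/
theorem stmt_15 (p : ℕ) [Fact p.Prime] (hp : 7 ≤ p)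
    (hrep : ∀ F : Polynomial (ZMod p), Irreducible F → 2 ≤ F.natDegree →
      ∀ a : Polynomial (ZMod p), ¬ F ∣ a →
        ∃ f : Polynomial (ZMod p), Squarefree f ∧ 1 ≤ f.natDegree ∧
          (∀ g : Polynomial (ZMod p), Irreducible g → g ∣ f →
            g.natDegree ≤ F.natDegree - 1) ∧ F ∣ f - a)
    (seq : ℕ → Polynomial (ZMod p)) (hseq0 : seq 0 = Polynomial.X)
    (hseq : ∀ n : ℕ,
      (seq (n + 1)).Monic ∧ Irreducible (seq (n + 1)) ∧
      ¬ seq (n + 1) ∣ (∏ i ∈ Finset.range (n + 1), seq i) ∧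
      (∃ h : Polynomial (ZMod p), h ∣ (∏ i ∈ Finset.range (n + 1), seq i) ∧
        seq (n + 1) ∣ h + 1) ∧
      (∀ g : Polynomial (ZMod p), g.Monic → Irreducible g →
        ¬ g ∣ (∏ i ∈ Finset.range (n + 1), seq i) →
        (∃ h : Polynomial (ZMod p), h ∣ (∏ i ∈ Finset.range (n + 1), seq i) ∧ g ∣ h + 1) →
        Ival p (seq (n + 1)) ≤ Ival p g)) :
    StrictMono (fun n => Ival p (seq n)) ∧
    ∀ g : Polynomial (ZMod p), g.Monic → Irreducible g → ∃ n, seq n = g :=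
  stmt_15_general p hrep seq hseq0 hseq
end

section
/- Let F ∈ F_q[X] be irreducible of degree r, and let S be a set of K monic irreducible polynomials of degree less than r. For each nonzero residue s modulo F let w(s) be the number of unordered pairs {u,v} ⊆ S with u ≠ v and uv ≡ s (mod F). Then w(s) ≤ K/2 for every s, and Σ_s w(s) = K(K-1)/2, where the sum is over all nonzero residues s. -/
/-!
If `u * v ≡ u * v' ≡ s (mod F)` with `F` prime not dividing `u`, then `v ≡ v' (mod F)`, and
`v = v'` as both have degree below `deg F`. So the pairs with product `s` are pairwise disjoint
subsets of `S`, and there are at most `K / 2` of them. Every pair has its product congruent to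
exactly one nonzero reduced residue, so summing over `s` counts each of the `K choose 2` pairs once.
-/

open Polynomial Finset

section Reduction

variable {k : Type*} [Field k] {F : k[X]}

theorem Polynomial.eq_of_dvd_sub_of_natDegree_lt {a b : k[X]} (h : F ∣ a - b)
    (ha : a.natDegree < F.natDegree) (hb : b.natDegree < F.natDegree) : a = b :=
  sub_eq_zero.mp <| eq_zero_of_dvd_of_natDegree_lt h <|
    (natDegree_sub_le a b).trans_lt (max_lt ha hb)

theorem Polynomial.mod_eq_iff_dvd_sub {p s : k[X]} (hs : s.natDegree < F.natDegree) :
    p % F = s ↔ F ∣ p - s := by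
  have hF : F ≠ 0 := by rintro rfl; simp at hs
  constructor
  · rintro rfl
    rw [EuclideanDomain.mod_eq_sub_mul_div, sub_sub_cancel]
    exact dvd_mul_right _ _
  · intro h
    rw [mod_eq_of_dvd_sub h, mod_eq_self_iff hF]
    exact degree_lt_degree hs

theorem Polynomial.eq_of_dvd_mul_sub_of_dvd_mul_sub (hF : Prime F) {x y y' s : k[X]}
    (hx : ¬F ∣ x) (hy : F ∣ x * y - s) (hy' : F ∣ x * y' - s)
    (hyd : y.natDegree < F.natDegree) (hyd' : y'.natDegree < F.natDegree) : y = y' := by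
  have hxy : F ∣ x * (y - y') := by
    simpa [mul_sub] using dvd_sub hy hy'
  exact eq_of_dvd_sub_of_natDegree_lt ((hF.dvd_mul.mp hxy).resolve_left hx) hyd hyd'

end Reduction

theorem Finset.exists_eq_pair_of_mem {α : Type*} [DecidableEq α] {t : Finset α} {x : α}
    (ht : #t = 2) (hx : x ∈ t) : ∃ y, x ≠ y ∧ t = {x, y} := by
  obtain ⟨a, b, hab, rfl⟩ := card_eq_two.mp ht
  rcases mem_insert.mp hx with rfl | hx
  · exact ⟨b, hab, rfl⟩
  · obtain rfl := mem_singleton.mp hx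
    exact ⟨a, hab.symm, pair_comm _ _⟩

theorem Finset.exists_ne_mul_iff_prod {M : Type*} [CommMonoid M] [DecidableEq M]
    {t : Finset M} (ht : #t = 2) (P : M → Prop) :
    (∃ u ∈ t, ∃ v ∈ t, u ≠ v ∧ P (u * v)) ↔ P (∏ z ∈ t, z) := by
  obtain ⟨a, b, hab, rfl⟩ := card_eq_two.mp ht
  rw [prod_pair hab]
  constructor
  · rintro ⟨u, hu, v, hv, huv, h⟩
    simp only [mem_insert, mem_singleton] at hu hv
    rcases hu with rfl | rfl <;> rcases hv with rfl | rfl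
    all_goals first | exact absurd rfl huv | simpa [mul_comm] using h
  · exact fun h => ⟨a, by simp, b, by simp, hab, h⟩

theorem Finset.card_mul_le_card_of_pairwiseDisjoint {α : Type*} [DecidableEq α]
    {S : Finset α} {P : Finset (Finset α)} {n : ℕ} (hP : ∀ t ∈ P, t ⊆ S ∧ #t = n)
    (hd : (P : Set (Finset α)).PairwiseDisjoint id) : n * #P ≤ #S :=
  calc n * #P = ∑ t ∈ P, #t := by rw [sum_congr rfl fun t ht => (hP t ht).2]; simp [mul_comm]
    _ = #(P.biUnion id) := (card_biUnion hd).symm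
    _ ≤ #S := card_le_card <| biUnion_subset.mpr fun t ht => (hP t ht).1

section Pairs

variable {R : Type*} [CommRing R]

open Classical in
noncomputable def pairsWithProduct (F : R) (S : Finset R) (s : R) : Finset (Finset R) :=
  {t ∈ S.powersetCard 2 | F ∣ (∏ z ∈ t, z) - s}

theorem mem_pairsWithProduct {F : R} {S : Finset R} {s : R} {t : Finset R} :
    t ∈ pairsWithProduct F S s ↔ t ⊆ S ∧ #t = 2 ∧ F ∣ (∏ z ∈ t, z) - s := by
  simp [pairsWithProduct, and_assoc]

theorem ncard_setOf_eq_card_pairsWithProduct [DecidableEq R] (F : R) (S : Finset R) (s : R) :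
    {t : Finset R | ↑t ⊆ (S : Set R) ∧ #t = 2 ∧ ∃ u ∈ t, ∃ v ∈ t, u ≠ v ∧ F ∣ u * v - s}.ncard =
      #(pairsWithProduct F S s) := by
  rw [← Set.ncard_coe_finset]
  congr 1
  ext t
  simp only [Set.mem_ofPred_eq, coe_subset, mem_coe, mem_pairsWithProduct]
  exact and_congr_right fun _ => and_congr_right fun ht =>
    exists_ne_mul_iff_prod ht (fun p => F ∣ p - s)

end Pairs

section Polynomial

variable {k : Type*} [Field k] {F : k[X]} {S : Finset k[X]}

theorem pairwiseDisjoint_pairsWithProduct (hF : Prime F) (hS : ∀ u ∈ S, ¬F ∣ u)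
    (hdeg : ∀ u ∈ S, u.natDegree < F.natDegree) (s : k[X]) :
    (pairsWithProduct F S s : Set (Finset k[X])).PairwiseDisjoint id := by
  classical
  intro t₁ ht₁ t₂ ht₂ hne
  refine disjoint_left.mpr fun x hx₁ hx₂ => hne ?_
  obtain ⟨hS₁, hc₁, hd₁⟩ := mem_pairsWithProduct.mp ht₁
  obtain ⟨hS₂, hc₂, hd₂⟩ := mem_pairsWithProduct.mp ht₂
  obtain ⟨y₁, hxy₁, rfl⟩ := exists_eq_pair_of_mem hc₁ hx₁
  obtain ⟨y₂, hxy₂, rfl⟩ := exists_eq_pair_of_mem hc₂ hx₂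
  rw [prod_pair hxy₁] at hd₁
  rw [prod_pair hxy₂] at hd₂
  rw [eq_of_dvd_mul_sub_of_dvd_mul_sub hF (hS x (hS₁ (by simp))) hd₁ hd₂
    (hdeg y₁ (hS₁ (by simp))) (hdeg y₂ (hS₂ (by simp)))]

theorem two_mul_card_pairsWithProduct_le (hF : Prime F) (hS : ∀ u ∈ S, ¬F ∣ u)
    (hdeg : ∀ u ∈ S, u.natDegree < F.natDegree) (s : k[X]) :
    2 * #(pairsWithProduct F S s) ≤ #S := by
  classical
  exact card_mul_le_card_of_pairwiseDisjoint
    (fun t ht => (mem_pairsWithProduct.mp ht).imp_right And.left)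
    (pairwiseDisjoint_pairsWithProduct hF hS hdeg s)

/-- Each pair `t` lies in `pairsWithProduct F S s` for exactly one reduced residue `s`, namely
`∏ t % F`, which is nonzero because the prime `F` divides no element of `S`. -/
theorem finsum_card_pairsWithProduct (hF : Prime F) (hS : ∀ u ∈ S, ¬F ∣ u) :
    ∑ᶠ s ∈ {s : k[X] | s ≠ 0 ∧ s.natDegree < F.natDegree}, #(pairsWithProduct F S s) =
      (#S).choose 2 := by
  classical
  set T := S.powersetCard 2
  set residue : Finset k[X] → k[X] := fun t => (∏ z ∈ t, z) % F
  have hF0 : F.natDegree ≠ 0 := hF.irreducible.natDegree_pos.ne'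
  have hfiber : ∀ s : k[X], s.natDegree < F.natDegree →
      pairsWithProduct F S s = {t ∈ T | residue t = s} := fun s hs => by
    ext t
    simp [mem_pairsWithProduct, T, residue, mod_eq_iff_dvd_sub hs, and_assoc]
  have hresidue : ∀ t ∈ T, residue t ≠ 0 ∧ (residue t).natDegree < F.natDegree := by
    refine fun t ht => ⟨fun h0 => ?_, natDegree_mod_lt _ hF0⟩
    obtain ⟨u, hu, hFu⟩ := (hF.dvd_finsetProd_iff id).mp (EuclideanDomain.mod_eq_zero.mp h0)
    exact hS u ((mem_powersetCard.mp ht).1 hu) hFu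
  rw [finsum_mem_eq_sum_of_subset (t := T.image residue), ← card_powersetCard,
    card_eq_sum_card_image residue]
  · exact sum_congr rfl fun s hs => by
      obtain ⟨t, ht, rfl⟩ := mem_image.mp hs
      rw [hfiber _ (hresidue t ht).2]
  · rintro s ⟨hs, hne⟩
    obtain ⟨t, ht⟩ := card_ne_zero.mp (Function.mem_support.mp hne)
    rw [hfiber s hs.2, mem_filter] at ht
    exact mem_image.mpr ⟨t, ht⟩
  · intro s hs
    obtain ⟨t, ht, rfl⟩ := mem_image.mp hs
    exact hresidue t ht

end Polynomial

theorem stmt_18_general (r : ℕ)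
    (Fq : Type*) [Field Fq]
    (F : Polynomial Fq) (hF : Irreducible F) (hdeg : F.natDegree = r)
    (S : Finset (Polynomial Fq))
    (hS : ∀ u ∈ S, u.Monic ∧ Irreducible u ∧ u.natDegree < r)
    (K : ℕ) (hK : S.card = K)
    (w : Polynomial Fq → ℕ)
    (hw : ∀ s, w s = {t : Finset (Polynomial Fq) | ↑t ⊆ (S : Set (Polynomial Fq)) ∧
      t.card = 2 ∧ ∃ u ∈ t, ∃ v ∈ t, u ≠ v ∧ F ∣ u * v - s}.ncard) :
    (∀ s : Polynomial Fq, 2 * w s ≤ K)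
    ∧ (∑ᶠ s ∈ {s : Polynomial Fq | s ≠ 0 ∧ s.natDegree < r}, w s) = K * (K - 1) / 2 := by
  classical
  subst hdeg hK
  have hw' : w = fun s => #(pairsWithProduct F S s) :=
    funext fun s => (hw s).trans (ncard_setOf_eq_card_pairsWithProduct F S s)
  have hdeg : ∀ u ∈ S, u.natDegree < F.natDegree := fun u hu => (hS u hu).2.2
  have hndvd : ∀ u ∈ S, ¬F ∣ u := fun u hu hFu =>
    (hS u hu).2.1.ne_zero (eq_zero_of_dvd_of_natDegree_lt hFu (hdeg u hu))
  subst hw'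
  exact ⟨two_mul_card_pairsWithProduct_le hF.prime hndvd hdeg,
    (finsum_card_pairsWithProduct hF.prime hndvd).trans (Nat.choose_two_right _)⟩

/-- Let `F ∈ F_q[X]` be irreducible of degree `r` and `S` a set of `K` monic irreducible
polynomials of degree less than `r`. For a nonzero residue `s` let `w(s)` be the number of
unordered pairs `{u,v} ⊆ S`, `u ≠ v`, with `uv ≡ s (mod F)`. Then `w(s) ≤ K/2` for all `s`,
and `Σ_s w(s) = K(K-1)/2` over all nonzero residues `s`. -/
theorem stmt_18 (q r : ℕ)
    (Fq : Type*) [Field Fq] [Fintype Fq] (hq : Fintype.card Fq = q)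
    (F : Polynomial Fq) (hF : Irreducible F) (hdeg : F.natDegree = r)
    (S : Finset (Polynomial Fq))
    (hS : ∀ u ∈ S, u.Monic ∧ Irreducible u ∧ u.natDegree < r)
    (K : ℕ) (hK : S.card = K)
    (w : Polynomial Fq → ℕ)
    (hw : ∀ s, w s = {t : Finset (Polynomial Fq) | ↑t ⊆ (S : Set (Polynomial Fq)) ∧
      t.card = 2 ∧ ∃ u ∈ t, ∃ v ∈ t, u ≠ v ∧ F ∣ u * v - s}.ncard) :
    (∀ s : Polynomial Fq, 2 * w s ≤ K)
    ∧ (∑ᶠ s ∈ {s : Polynomial Fq | s ≠ 0 ∧ s.natDegree < r}, w s) = K * (K - 1) / 2 :=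
  stmt_18_general r Fq F hF hdeg S hS K hK w hw
end
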